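/- Let X, X′ ∈ M_{(n+1)×n}(F) and suppose X′ = diag(k,1)·X·k′ for some k ∈ Iw_n and k′ ∈ Iw_n, where diag(k,1) ∈ GL_{n+1}(F) is block diagonal with blocks k and 1. Then X satisfies the Weak Minor Condition if and only if X′ satisfies the Weak Minor Condition. -/

import Mathlib

open Matrix

noncomputable section

/-- `v` is a surjective discrete (additive) valuation on the field `F` with uniformizer `ϖ`,
with the convention `v 0 = ⊤`. -/
def IsDVal {F : Type*} [Field F] (v : F → WithTop ℤ) (ϖ : F) : Prop :=
  (∀ x : F, v x = ⊤ ↔ x = 0) ∧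
  (∀ x y : F, v (x * y) = v x + v y) ∧
  (∀ x y : F, min (v x) (v y) ≤ v (x + y)) ∧
  (∀ k : ℤ, ∃ x : F, v x = (k : WithTop ℤ)) ∧
  v ϖ = (1 : WithTop ℤ)

/-- `tMat ϖ ν r` is the integer power `t_ν^r` of the matrix `t_ν = diag(ϖ^{ν-1}, …, ϖ, 1)`. -/
def tMat {F : Type*} [Field F] (ϖ : F) (ν : ℕ) (r : ℤ) : Matrix (Fin ν) (Fin ν) F :=
  Matrix.diagonal fun i => ϖ ^ (r * ((ν : ℤ) - 1 - ((i : ℕ) : ℤ)))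

/-- The antidiagonal permutation matrix `w_ν` ((1-based) entries `1` iff `i + j = ν + 1`). -/
def wMat (F : Type*) [Field F] (ν : ℕ) : Matrix (Fin ν) (Fin ν) F :=
  Matrix.of fun i j => if (i : ℕ) + (j : ℕ) + 1 = ν then 1 else 0

/-- `GL_ν(𝒪)`: integral matrices with an integral two-sided inverse. -/
def GLO {F : Type*} [Field F] (v : F → WithTop ℤ) (ν : ℕ) : Set (Matrix (Fin ν) (Fin ν) F) :=
  {g | (∀ i j, 0 ≤ v (g i j)) ∧
    ∃ g' : Matrix (Fin ν) (Fin ν) F, (∀ i j, 0 ≤ v (g' i j)) ∧ g * g' = 1 ∧ g' * g = 1}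

/-- `N°_ν`: integral upper-triangular unipotent matrices. -/
def NO {F : Type*} [Field F] (v : F → WithTop ℤ) (ν : ℕ) : Set (Matrix (Fin ν) (Fin ν) F) :=
  {g | (∀ i j, 0 ≤ v (g i j)) ∧ (∀ i, g i i = 1) ∧ ∀ i j : Fin ν, j < i → g i j = 0}

/-- `N_ν(F)`: all upper-triangular unipotent matrices. -/
def Nfull (F : Type*) [Field F] (ν : ℕ) : Set (Matrix (Fin ν) (Fin ν) F) :=
  {g | (∀ i, g i i = 1) ∧ ∀ i j : Fin ν, j < i → g i j = 0}

/-- The standard Iwahori subgroup `Iw_ν`. -/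
def Iw {F : Type*} [Field F] (v : F → WithTop ℤ) (ν : ℕ) : Set (Matrix (Fin ν) (Fin ν) F) :=
  {g | g ∈ GLO v ν ∧ ∀ i j : Fin ν, j < i → (1 : WithTop ℤ) ≤ v (g i j)}

/-- `K_ν^{(r)} = GL_ν(𝒪) ∩ t_ν^{-r}·GL_ν(𝒪)·t_ν^{r}` (for any `r : ℤ`). -/
def Kpar {F : Type*} [Field F] (v : F → WithTop ℤ) (ϖ : F) (ν : ℕ) (r : ℤ) :
    Set (Matrix (Fin ν) (Fin ν) F) :=
  {g | g ∈ GLO v ν ∧ tMat ϖ ν r * g * tMat ϖ ν (-r) ∈ GLO v ν}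

/-- `K_ν^{⟨r⟩}`. -/
def KparAng {F : Type*} [Field F] (v : F → WithTop ℤ) (ϖ : F) (ν : ℕ) (r : ℤ) :
    Set (Matrix (Fin ν) (Fin ν) F) :=
  {g | g ∈ Kpar v ϖ ν r ∧ ∀ i, ((|r| - 1 : ℤ) : WithTop ℤ) ≤ v (g i i - 1)}

/-- `K_ν^{[r]}`. -/
def KparSq {F : Type*} [Field F] (v : F → WithTop ℤ) (ϖ : F) (ν : ℕ) (r : ℤ) :
    Set (Matrix (Fin ν) (Fin ν) F) :=
  {g | g ∈ Kpar v ϖ ν r ∧ ∀ i, ((|r| : ℤ) : WithTop ℤ) ≤ v (g i i - 1)}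

/-- A subset of a monoid is a subgroup. -/
def IsSubgrp {M : Type*} [Monoid M] (S : Set M) : Prop :=
  (1 : M) ∈ S ∧ (∀ a ∈ S, ∀ b ∈ S, a * b ∈ S) ∧ ∀ a ∈ S, ∃ b ∈ S, a * b = 1 ∧ b * a = 1

/-- A standard deeper Iwahori subgroup: a subgroup `K ⊆ Iw_ν` with `K ∩ N_ν(F) = N°_ν`. -/
def IsStdDeeperIwahori {F : Type*} [Field F] (v : F → WithTop ℤ) (ν : ℕ)
    (K : Set (Matrix (Fin ν) (Fin ν) F)) : Prop :=
  IsSubgrp K ∧ K ⊆ Iw v ν ∧ K ∩ Nfull F ν = NO v ν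

/-- The all-ones column vector of length `n`. -/
def uCol (F : Type*) [Field F] (n : ℕ) : Matrix (Fin n) (Fin 1) F :=
  Matrix.of fun _ _ => 1

/-- The twisting matrix `m = [[w_n, u],[0,1]]`. -/
def mMat (F : Type*) [Field F] (n : ℕ) : Matrix (Fin (n + 1)) (Fin (n + 1)) F :=
  Matrix.reindex finSumFinEquiv finSumFinEquiv
    (Matrix.fromBlocks (wMat F n) (uCol F n) 0 (1 : Matrix (Fin 1) (Fin 1) F))

/-- Block-diagonal embedding `h ↦ diag(h, 1)`. -/
def dg1 {F : Type*} [Field F] {n : ℕ} (h : Matrix (Fin n) (Fin n) F) :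
    Matrix (Fin (n + 1)) (Fin (n + 1)) F :=
  Matrix.reindex finSumFinEquiv finSumFinEquiv
    (Matrix.fromBlocks h 0 0 (1 : Matrix (Fin 1) (Fin 1) F))

/-- The subgroup `K_H^{(r)} ⊆ GL_n(𝒪)`. -/
def KH {F : Type*} [Field F] (v : F → WithTop ℤ) (ϖ : F) (n : ℕ) (r : ℤ) :
    Set (Matrix (Fin n) (Fin n) F) :=
  {h | h ∈ GLO v n ∧ (∀ i j, 0 ≤ v ((tMat ϖ n (-r) * h * tMat ϖ n r) i j)) ∧
    (mMat F n)⁻¹ * dg1 h * mMat F n ∈ Kpar v ϖ (n + 1) (-r)}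

/-- The double-coset set `K₁ · X₀ · K₂`. -/
def KXK {F : Type*} [Field F] {p q : ℕ} (K1 : Set (Matrix (Fin p) (Fin p) F))
    (X0 : Matrix (Fin p) (Fin q) F) (K2 : Set (Matrix (Fin q) (Fin q) F)) :
    Set (Matrix (Fin p) (Fin q) F) :=
  {X | ∃ k ∈ K1, ∃ k' ∈ K2, X = k * X0 * k'}

/-- The antidiagonal rectangular matrix `X°` with `X°_{n+2-i, i} = ϖ^{λ_i}` (1-based indices)
and all other entries `0`. -/
def Xanti {F : Type*} [Field F] (ϖ : F) (n : ℕ) (lam : Fin n → ℤ) :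
    Matrix (Fin (n + 1)) (Fin n) F :=
  Matrix.of fun r j => if (r : ℕ) + (j : ℕ) = n then ϖ ^ (lam j) else 0

/-- `diag(ϖ^{λ_1}, …, ϖ^{λ_ν}) · w_ν`. -/
def Xdw {F : Type*} [Field F] (ϖ : F) (ν : ℕ) (lam : Fin ν → ℤ) : Matrix (Fin ν) (Fin ν) F :=
  Matrix.diagonal (fun i => ϖ ^ (lam i)) * wMat F ν

/-- The rectangular matrix `e_{n+1,n}` with upper `n×n` block the identity and zero last row. -/
def ePad (F : Type*) [Field F] (n : ℕ) : Matrix (Fin (n + 1)) (Fin n) F :=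
  Matrix.of fun i j => if (i : ℕ) = (j : ℕ) then 1 else 0

/-- `λ_1 + ⋯ + λ_r`. -/
def minorSum {n : ℕ} (lam : Fin n → ℤ) (r : ℕ) (hrn : r ≤ n) : ℤ :=
  ∑ i : Fin r, lam (Fin.castLE hrn i)

/-- Row indices of the Southwest-principal `r×r` minor: the last `r` rows. -/
def swRow (n r : ℕ) (hrn : r ≤ n) (i : Fin r) : Fin (n + 1) :=
  ⟨n + 1 - r + (i : ℕ), by have := i.isLt; omega⟩

/-- The Minor Condition (relative to fixed integers `λ_1 < ⋯ < λ_n`). -/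
def MinorCond {F : Type*} [Field F] (v : F → WithTop ℤ) {n : ℕ} (lam : Fin n → ℤ)
    (X : Matrix (Fin (n + 1)) (Fin n) F) : Prop :=
  ∀ r : ℕ, 1 ≤ r → ∀ hrn : r ≤ n,
    (∀ (f : Fin r → Fin (n + 1)) (g : Fin r → Fin n), StrictMono f → StrictMono g →
      ((minorSum lam r hrn : ℤ) : WithTop ℤ) ≤ v ((X.submatrix f g).det)) ∧
    v ((X.submatrix (swRow n r hrn) (Fin.castLE hrn)).det) = ((minorSum lam r hrn : ℤ) : WithTop ℤ)

/-- The Weak Minor Condition: Minor Condition restricted to anchored minors. -/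
def WeakMinorCond {F : Type*} [Field F] (v : F → WithTop ℤ) {n : ℕ} (lam : Fin n → ℤ)
    (X : Matrix (Fin (n + 1)) (Fin n) F) : Prop :=
  ∀ r : ℕ, 1 ≤ r → ∀ hrn : r ≤ n,
    (∀ (f : Fin r → Fin (n + 1)) (g : Fin r → Fin n), StrictMono f → StrictMono g →
      Fin.last n ∈ Set.range f →
      ((minorSum lam r hrn : ℤ) : WithTop ℤ) ≤ v ((X.submatrix f g).det)) ∧
    v ((X.submatrix (swRow n r hrn) (Fin.castLE hrn)).det) = ((minorSum lam r hrn : ℤ) : WithTop ℤ)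

/-- Condition `Z(i)`: `X_{n+2-i', j} = 0` for all `1 ≤ i' ≤ i` and `i' < j ≤ n` (1-based). -/
def CondZ {F : Type*} [Field F] {n : ℕ} (X : Matrix (Fin (n + 1)) (Fin n) F) (i : ℕ) : Prop :=
  ∀ i' j : ℕ, (h1 : 1 ≤ i') → (h2 : i' ≤ i) → (h3 : i' < j) → (h4 : j ≤ n) →
    X ⟨n + 1 - i', by omega⟩ ⟨j - 1, by omega⟩ = 0

/-- Condition `Z'(j)`: `X_{n+2-i, j'} = 0` for all `j + 1 ≤ j' < i ≤ n + 1` (1-based). -/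
def CondZpr {F : Type*} [Field F] {n : ℕ} (X : Matrix (Fin (n + 1)) (Fin n) F) (j : ℕ) : Prop :=
  ∀ j' i : ℕ, (h1 : j + 1 ≤ j') → (h2 : j' < i) → (h3 : i ≤ n + 1) →
    X ⟨n + 1 - i, by omega⟩ ⟨j' - 1, by omega⟩ = 0

/-- `h` is `s`-small. -/
def SSmall {F : Type*} [Field F] (v : F → WithTop ℤ) {n : ℕ} (s : ℤ)
    (h : Matrix (Fin n) (Fin n) F) : Prop :=
  (∀ i, v (h i i) = 0) ∧
  ∀ i j : Fin n, ((|((j : ℕ) : ℤ) - ((i : ℕ) : ℤ)| * s : ℤ) : WithTop ℤ) ≤ v (h i j)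

/-- Block form `[[α, 0], [*, *]]` with `α` of size `i × i` lower triangular with diagonal
entries of valuation `0`. -/
def BlockLowUpTo {F : Type*} [Field F] (v : F → WithTop ℤ) {n : ℕ} (i : ℕ)
    (h : Matrix (Fin n) (Fin n) F) : Prop :=
  (∀ a : Fin n, (a : ℕ) < i → v (h a a) = 0) ∧
  ∀ a b : Fin n, (a : ℕ) < i → (a : ℕ) < (b : ℕ) → h a b = 0

/-- `h` is upper-`s`-small up to row `i`. -/
def UpperSmallUpTo {F : Type*} [Field F] (v : F → WithTop ℤ) {n : ℕ} (s : ℤ) (i : ℕ)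
    (h : Matrix (Fin n) (Fin n) F) : Prop :=
  ∃ hm hp : Matrix (Fin n) (Fin n) F, BlockLowUpTo v i hm ∧ SSmall v s hp ∧ h = hm * hp

/-- `h` is extremely `s`-small. -/
def ExtrSmall {F : Type*} [Field F] (v : F → WithTop ℤ) {n : ℕ} (s : ℤ)
    (h : Matrix (Fin n) (Fin n) F) : Prop :=
  SSmall v s h ∧ Matrix.mulVec (wMat F n * h - 1) (fun _ => (1 : F)) = 0

/-- `h` is lower triangular with diagonal entries of valuation `0`. -/
def LowerUnitTri {F : Type*} [Field F] (v : F → WithTop ℤ) {n : ℕ}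
    (h : Matrix (Fin n) (Fin n) F) : Prop :=
  (∀ a : Fin n, v (h a a) = 0) ∧ ∀ a b : Fin n, a < b → h a b = 0

/-- `h` is lower-`s`-small from column `j` (1-based `j`). -/
def LowerSmallFrom {F : Type*} [Field F] (v : F → WithTop ℤ) {n : ℕ} (s : ℤ) (j : ℕ)
    (h : Matrix (Fin n) (Fin n) F) : Prop :=
  ∀ a b : Fin n, j ≤ (b : ℕ) + 1 → (b : ℕ) < (a : ℕ) →
    (((((a : ℕ) : ℤ) - ((b : ℕ) : ℤ)) * s : ℤ) : WithTop ℤ) ≤ v (h a b)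

/-- Block form `[[α₋, 0], [*, 1]]` with `α₋` of size `(j-1) × (j-1)` lower triangular with
diagonal entries of valuation `0`, and lower-right identity block (1-based `j`). -/
def BlockLowFrom {F : Type*} [Field F] (v : F → WithTop ℤ) {n : ℕ} (j : ℕ)
    (h : Matrix (Fin n) (Fin n) F) : Prop :=
  (∀ a : Fin n, (a : ℕ) < j - 1 → v (h a a) = 0) ∧
  (∀ a b : Fin n, (a : ℕ) < j - 1 → (a : ℕ) < (b : ℕ) → h a b = 0) ∧
  ∀ a b : Fin n, j - 1 ≤ (a : ℕ) → j - 1 ≤ (b : ℕ) → h a b = if a = b then 1 else 0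

/-- The action `X ._s h := diag(t_n^{-s} h^{-w} t_n^{s}, 1) · X · (t_n^{-s} h t_n^{s})`. -/
def actS {F : Type*} [Field F] (ϖ : F) {n : ℕ} (s : ℤ) (X : Matrix (Fin (n + 1)) (Fin n) F)
    (h : Matrix (Fin n) (Fin n) F) : Matrix (Fin (n + 1)) (Fin n) F :=
  dg1 (tMat ϖ n (-s) * (wMat F n * h⁻¹ * (wMat F n)⁻¹) * tMat ϖ n s) * X *
    (tMat ϖ n (-s) * h * tMat ϖ n s)

/-- The residue field `𝒪/(ϖ)` has cardinality `q`. -/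
def ResidueCard {F : Type*} [Field F] (v : F → WithTop ℤ) (q : ℕ) : Prop :=
  ∃ R : Finset F, R.card = q ∧ (∀ x ∈ R, 0 ≤ v x) ∧
    ∀ x : F, 0 ≤ v x → ∃! y, y ∈ R ∧ (1 : WithTop ℤ) ≤ v (x - y)

/-- `H` has index `k` in `G`: there is a transversal of cardinality `k`. -/
def IndexEq {M : Type*} [Monoid M] (H G : Set M) (k : ℕ) : Prop :=
  ∃ T : Finset M, T.card = k ∧ ↑T ⊆ G ∧ ∀ g ∈ G, ∃! t, t ∈ T ∧ ∃ h ∈ H, g = h * t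

def cExp (ν : ℕ) : ℕ := (ν - 1) * ν * (ν + 1) / 6

def dExp (n : ℕ) : ℕ := n * (n + 1) * (2 * n + 1) / 6

/-- The block matrix `B = [[1_n, u],[0,1]]`. -/
def BMat (F : Type*) [Field F] (n : ℕ) : Matrix (Fin (n + 1)) (Fin (n + 1)) F :=
  Matrix.reindex finSumFinEquiv finSumFinEquiv
    (Matrix.fromBlocks (1 : Matrix (Fin n) (Fin n) F) (uCol F n) 0 (1 : Matrix (Fin 1) (Fin 1) F))

/-- The group `G = GL_n(F) × GL_{n+1}(F)` (as a matrix pair monoid). -/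
abbrev GPair (F : Type*) [Field F] (n : ℕ) :=
  Matrix (Fin n) (Fin n) F × Matrix (Fin (n + 1)) (Fin (n + 1)) F

def tPair {F : Type*} [Field F] (ϖ : F) (n : ℕ) : GPair F n :=
  (tMat ϖ n 1, tMat ϖ (n + 1) 1)

def tPairInv {F : Type*} [Field F] (ϖ : F) (n : ℕ) : GPair F n :=
  (tMat ϖ n (-1), tMat ϖ (n + 1) (-1))

/-- `m_s = (t_n^s, m·t_{n+1}^s)`. -/
def mPair {F : Type*} [Field F] (ϖ : F) (n : ℕ) (s : ℤ) : GPair F n :=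
  (tMat ϖ n s, mMat F n * tMat ϖ (n + 1) s)

/-- `ι(h) = (h, diag(h,1))`. -/
def iotaPair {F : Type*} [Field F] {n : ℕ} (h : Matrix (Fin n) (Fin n) F) : GPair F n :=
  (h, dg1 h)

def NOPair {F : Type*} [Field F] (v : F → WithTop ℤ) (n : ℕ) : Set (GPair F n) :=
  {p | p.1 ∈ NO v n ∧ p.2 ∈ NO v (n + 1)}

def KAngPair {F : Type*} [Field F] (v : F → WithTop ℤ) (ϖ : F) (n : ℕ) (r : ℤ) :
    Set (GPair F n) :=
  {p | p.1 ∈ KparAng v ϖ n r ∧ p.2 ∈ KparAng v ϖ (n + 1) r}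

/-- The left coset `g · K`. -/
def lCoset {M : Type*} [Mul M] (g : M) (K : Set M) : Set M := (g * ·) '' K

/-!
Cauchy–Binet writes each `r × r` minor of `diag(k, 1) · X · k'` as a sum, over `r`-tuples of rows
and columns, of minors of `X` times products of entries of `diag(k, 1)` and `k'`, all of which are
integral. Since the last row of `diag(k, 1)` is the last unit vector, an anchored minor only
involves anchored minors of `X`, which gives the lower bounds. In the Southwest-principal minor the diagonal
term has a unit coefficient, while every other term uses an entry of `diag(k, 1)` or `k'` strictly
below the diagonal, hence in `ϖ𝒪`, so the valuation is attained exactly. Since `Iw_n` is a group,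
the converse follows by applying this to `k⁻¹` and `k'⁻¹`.
-/

namespace AddValuation

variable {R : Type*} [CommRing R] {Γ : Type*} [LinearOrderedAddCommMonoidWithTop Γ]
  (w : AddValuation R Γ)

theorem map_prod {ι : Type*} (s : Finset ι) (f : ι → R) :
    w (∏ i ∈ s, f i) = ∑ i ∈ s, w (f i) := by
  classical
  induction s using Finset.induction_on with
  | empty => simp
  | insert a s ha ih => rw [Finset.prod_insert ha, Finset.sum_insert ha, map_mul, ih]

theorem map_sum_eq_of_lt {ι : Type*} [DecidableEq ι] {s : Finset ι} {f : ι → R} {j : ι}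
    (hj : j ∈ s) (hf : ∀ i ∈ s \ {j}, w (f j) < w (f i)) : w (∑ i ∈ s, f i) = w (f j) := by
  rw [Finset.sum_eq_add_sum_sdiff_singleton_of_mem hj]
  rcases eq_or_ne (w (f j)) ⊤ with htop | htop
  · rw [Finset.sum_eq_zero fun i hi => absurd (htop ▸ hf i hi) not_top_lt, add_zero]
  · exact map_add_eq_of_lt_left w (map_lt_sum w htop hf)

theorem lt_map_prod {ι : Type*} {s : Finset ι} {f : ι → R} {g : Γ} {i : ι} (hi : i ∈ s)
    (hg : g < w (f i)) (h0 : ∀ j ∈ s, 0 ≤ w (f j)) : g < w (∏ j ∈ s, f j) :=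
  hg.trans_le <| (map_prod w s f).symm ▸ Finset.single_le_sum h0 hi

theorem map_prod_nonneg {ι : Type*} {s : Finset ι} {f : ι → R} (h0 : ∀ j ∈ s, 0 ≤ w (f j)) :
    0 ≤ w (∏ j ∈ s, f j) :=
  (map_prod w s f).symm ▸ Finset.sum_nonneg h0

theorem map_sign_mul {n : Type*} [Fintype n] [DecidableEq n] (σ : Equiv.Perm n) (x : R) :
    w ((Equiv.Perm.sign σ : ℤ) * x) = w x := by
  rcases Int.units_eq_one_or (Equiv.Perm.sign σ) with h | h <;> simp [h]

variable {n : Type*} [Fintype n] [DecidableEq n]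

theorem le_map_det (M : Matrix n n R) {g : Γ}
    (h : ∀ σ : Equiv.Perm n, g ≤ w (∏ i, M (σ i) i)) : g ≤ w M.det := by
  rw [Matrix.det_apply']
  exact map_le_sum w fun σ _ => (map_sign_mul w σ _).symm ▸ h σ

theorem lt_map_det (M : Matrix n n R) {g : Γ} (hg : g ≠ ⊤)
    (h : ∀ σ : Equiv.Perm n, g < w (∏ i, M (σ i) i)) : g < w M.det := by
  rw [Matrix.det_apply']
  exact map_lt_sum w hg fun σ _ => (map_sign_mul w σ _).symm ▸ h σ

theorem map_det_nonneg {M : Matrix n n R} (hM : ∀ i j, 0 ≤ w (M i j)) : 0 ≤ w M.det :=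
  le_map_det w M fun _ => map_prod_nonneg w fun _ _ => hM _ _

end AddValuation

theorem AddValuation.lt_map_mul_of_pos_of_le {R : Type*} [CommRing R]
    (w : AddValuation R (WithTop ℤ)) {a b : R} {c : ℤ} (ha : 0 < w a) (hb : c ≤ w b) :
    (c : WithTop ℤ) < w (a * b) := by
  rw [AddValuation.map_mul, ← zero_add (c : WithTop ℤ)]
  exact WithTop.add_lt_add_of_lt_of_le WithTop.coe_ne_top ha hb

theorem IsDVal.map_one {F : Type*} [Field F] {v : F → WithTop ℤ} {ϖ : F} (hval : IsDVal v ϖ) :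
    v 1 = 0 := by
  have h := hval.2.1 1 1
  rw [one_mul] at h
  lift v 1 to ℤ using fun h1 => one_ne_zero ((hval.1 1).1 h1) with m
  norm_cast at h ⊢
  omega

def IsDVal.toAddValuation {F : Type*} [Field F] {v : F → WithTop ℤ} {ϖ : F}
    (hval : IsDVal v ϖ) : AddValuation F (WithTop ℤ) :=
  AddValuation.of v ((hval.1 0).2 rfl) hval.map_one hval.2.2.1 hval.2.1

namespace Matrix

variable {R : Type*} [CommRing R] {m ι : Type*}

theorem det_submatrix_eq_zero_of_not_injective_left {r : Type*} [Fintype r] [DecidableEq r]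
    (A : Matrix m ι R) {f : r → m} (g : r → ι) (hf : ¬f.Injective) : (A.submatrix f g).det = 0 := by
  obtain ⟨i, j, hij, hne⟩ := Function.not_injective_iff.mp hf
  exact det_zero_of_row_eq hne (by ext; simp [hij])

theorem det_submatrix_eq_zero_of_not_injective_right {r : Type*} [Fintype r] [DecidableEq r]
    (A : Matrix m ι R) (f : r → m) {g : r → ι} (hg : ¬g.Injective) : (A.submatrix f g).det = 0 := by
  obtain ⟨i, j, hij, hne⟩ := Function.not_injective_iff.mp hg
  exact det_zero_of_column_eq hne (by simp [hij])

variable [Fintype m] [DecidableEq m] [Fintype ι]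

theorem det_mul_eq_sum_rows (M : Matrix m ι R) (N : Matrix ι m R) :
    (M * N).det = ∑ φ : m → ι, (∏ i, M i (φ i)) * (N.submatrix φ id).det := by
  have hrows : M * N = Matrix.of fun i => ∑ l, M i l • N l := by
    ext i j
    simp [Matrix.mul_apply, Finset.sum_apply]
  rw [hrows]
  change detRowAlternating.toMultilinearMap (fun i => ∑ l, M i l • N l) = _
  rw [MultilinearMap.map_sum]
  refine Finset.sum_congr rfl fun φ _ => ?_
  rw [MultilinearMap.map_smul_univ, smul_eq_mul]
  rfl

theorem det_mul_eq_sum_cols (M : Matrix m ι R) (N : Matrix ι m R) :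
    (M * N).det = ∑ ψ : m → ι, (∏ j, N (ψ j) j) * (M.submatrix id ψ).det := by
  rw [← det_transpose, transpose_mul, det_mul_eq_sum_rows]
  simp only [transpose_apply, ← transpose_submatrix, det_transpose]

end Matrix

theorem Fin.val_eq_of_injective_of_val_le {r N : ℕ} {φ : Fin r → Fin N}
    (hφ : Function.Injective φ) (hle : ∀ i, (φ i : ℕ) ≤ i) (i : Fin r) : (φ i : ℕ) = i := by
  induction i using WellFoundedLT.induction with
  | _ i ih =>
    refine (hle i).antisymm (not_lt.1 fun hlt => hlt.ne ?_)
    have hj : φ ⟨φ i, hlt.trans i.2⟩ = φ i := Fin.ext (ih _ hlt)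
    exact congrArg Fin.val (hφ hj)

theorem Equiv.Perm.exists_lt_apply_of_ne_one {r : ℕ} {σ : Equiv.Perm (Fin r)} (hσ : σ ≠ 1) :
    ∃ i, i < σ i := by
  by_contra! h
  exact hσ <| Equiv.ext fun i => Fin.ext <| Fin.val_eq_of_injective_of_val_le σ.injective h i

theorem Fin.eq_castLE_of_injective {r n : ℕ} (hrn : r ≤ n) {ψ : Fin r → Fin n}
    (hψ : Function.Injective ψ) (hle : ∀ j, ψ j ≤ Fin.castLE hrn j) : ψ = Fin.castLE hrn :=
  funext fun j => Fin.ext <| Fin.val_eq_of_injective_of_val_le hψ hle j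

theorem eq_swRow_of_injective {n r : ℕ} (hrn : r ≤ n) {φ : Fin r → Fin (n + 1)}
    (hφ : Function.Injective φ) (hge : ∀ i, swRow n r hrn i ≤ φ i) : φ = swRow n r hrn := by
  have key := Fin.val_eq_of_injective_of_val_le (φ := fun i => (φ i.rev).rev)
    (Fin.rev_injective.comp (hφ.comp Fin.rev_injective)) fun i => by
      have := hge i.rev
      simp only [swRow, Fin.le_def, Fin.val_rev] at this ⊢
      omega
  funext i
  have := key i.rev
  simp only [Fin.rev_rev, Fin.val_rev] at this
  ext
  simp only [swRow]
  omega

theorem swRow_last {n r : ℕ} (hr : 1 ≤ r) (hrn : r ≤ n) :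
    swRow n r hrn ⟨r - 1, by omega⟩ = Fin.last n := by
  ext
  simp only [swRow, Fin.val_last]
  omega

section Iwahori

variable {F : Type*} [Field F] {w : AddValuation F (WithTop ℤ)} {n : ℕ}
  {k : Matrix (Fin n) (Fin n) F}

theorem GLO.map_det_eq_zero (hk : k ∈ GLO w n) : w k.det = 0 := by
  obtain ⟨hint, g, hg, hkg, -⟩ := hk
  have hsum : w k.det + w g.det = 0 := by
    rw [← AddValuation.map_mul, ← Matrix.det_mul, hkg, Matrix.det_one, AddValuation.map_one]
  exact ((add_eq_zero_iff_of_nonneg (w.map_det_nonneg hint) (w.map_det_nonneg hg)).1 hsum).1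

theorem Iw.pos_of_lt (hk : k ∈ Iw w n) {i j : Fin n} (hji : j < i) : 0 < w (k i j) :=
  zero_lt_one.trans_le (hk.2 i j hji)

/-- The reduction of `k` modulo `ϖ` is upper triangular, so its determinant, a unit, is congruent
to the product of the diagonal entries. -/
theorem Iw.map_diag (hk : k ∈ Iw w n) (i : Fin n) : w (k i i) = 0 := by
  refine (hk.1.1 i i).antisymm' (not_lt.1 fun hpos => ?_)
  have hdet : 0 < w k.det := w.lt_map_det k (by simp) fun σ => by
    rcases eq_or_ne σ 1 with rfl | hσ
    · exact w.lt_map_prod (Finset.mem_univ i) hpos fun j _ => hk.1.1 j j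
    · obtain ⟨j, hj⟩ := Equiv.Perm.exists_lt_apply_of_ne_one hσ
      exact w.lt_map_prod (Finset.mem_univ j) (Iw.pos_of_lt hk hj) fun _ _ => hk.1.1 _ _
  exact hdet.ne' (GLO.map_det_eq_zero hk.1)

theorem Iw.exists_inv (hk : k ∈ Iw w n) : ∃ k₂ ∈ Iw w n, k * k₂ = 1 ∧ k₂ * k = 1 := by
  obtain ⟨⟨hint, g, hg, hkg, hgk⟩, hlow⟩ := id hk
  refine ⟨g, ⟨⟨hg, k, hint, hgk, hkg⟩, fun i j hji => ?_⟩, hkg, hgk⟩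
  -- downward induction on the row `i`, reading off row `i` of `k * g = 1` in column `j`
  induction i using WellFoundedGT.induction with
  | _ i ih =>
    have hrow : k i i * g i j = -∑ l ∈ Finset.univ.erase i, k i l * g l j := by
      have h := congrFun (congrFun hkg i) j
      rw [Matrix.mul_apply, ← Finset.add_sum_erase _ _ (Finset.mem_univ i),
        Matrix.one_apply_ne hji.ne'] at h
      exact eq_neg_of_add_eq_zero_left h
    have h1 : 1 ≤ w (k i i * g i j) := by
      rw [hrow, AddValuation.map_neg]
      refine w.map_le_sum fun l hl => ?_
      rw [AddValuation.map_mul]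
      rcases lt_or_gt_of_ne (Finset.ne_of_mem_erase hl) with hli | hli
      · exact (hlow i l hli).trans (le_add_of_nonneg_right (hg l j))
      · exact (ih l hli (hji.trans hli)).trans (le_add_of_nonneg_left (hint i l))
    rwa [AddValuation.map_mul, Iw.map_diag hk, zero_add] at h1

end Iwahori

section BlockDiagonal

variable {F : Type*} [Field F] {n : ℕ} (h : Matrix (Fin n) (Fin n) F)

@[simp]
theorem dg1_apply_castSucc_castSucc (i j : Fin n) : dg1 h i.castSucc j.castSucc = h i j := by
  simp [dg1]

@[simp]
theorem dg1_apply_castSucc_last (i : Fin n) : dg1 h i.castSucc (Fin.last n) = 0 := by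
  simp [dg1]

@[simp]
theorem dg1_apply_last_castSucc (j : Fin n) : dg1 h (Fin.last n) j.castSucc = 0 := by
  simp [dg1]

@[simp]
theorem dg1_apply_last_last : dg1 h (Fin.last n) (Fin.last n) = 1 := by
  simp [dg1]

theorem dg1_apply_last_of_ne {j : Fin (n + 1)} (hj : j ≠ Fin.last n) :
    dg1 h (Fin.last n) j = 0 := by
  induction j using Fin.lastCases with
  | last => exact absurd rfl hj
  | cast j => exact dg1_apply_last_castSucc h j

theorem dg1_mul (h' : Matrix (Fin n) (Fin n) F) : dg1 h * dg1 h' = dg1 (h * h') := by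
  simp [dg1, Matrix.fromBlocks_multiply]

@[simp]
theorem dg1_one : dg1 (1 : Matrix (Fin n) (Fin n) F) = 1 := by
  simp [dg1]

variable {w : AddValuation F (WithTop ℤ)} {k : Matrix (Fin n) (Fin n) F}

theorem dg1_entries_nonneg {h : Matrix (Fin n) (Fin n) F} (hh : ∀ i j, 0 ≤ w (h i j))
    (i j : Fin (n + 1)) : 0 ≤ w (dg1 h i j) := by
  induction i using Fin.lastCases <;> induction j using Fin.lastCases <;> simp [hh]

theorem dg1_mem_Iw (hk : k ∈ Iw w n) : dg1 k ∈ Iw w (n + 1) := by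
  obtain ⟨⟨hint, g, hg, hkg, hgk⟩, hlow⟩ := hk
  refine ⟨⟨dg1_entries_nonneg hint, dg1 g, dg1_entries_nonneg hg, by rw [dg1_mul, hkg, dg1_one],
    by rw [dg1_mul, hgk, dg1_one]⟩, fun i j hji => ?_⟩
  induction i using Fin.lastCases <;> induction j using Fin.lastCases <;>
    simp_all [Fin.castSucc_lt_last]

end BlockDiagonal

namespace WeakMinorCond

variable {F : Type*} [Field F] {w : AddValuation F (WithTop ℤ)} {n : ℕ} {lam : Fin n → ℤ}
  {X : Matrix (Fin (n + 1)) (Fin n) F}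

theorem le_map_det_submatrix (hX : WeakMinorCond w lam X) {r : ℕ} (hr : 1 ≤ r) (hrn : r ≤ n)
    {φ : Fin r → Fin (n + 1)} (ψ : Fin r → Fin n) (hlast : Fin.last n ∈ Set.range φ) :
    (minorSum lam r hrn : WithTop ℤ) ≤ w (X.submatrix φ ψ).det := by
  by_cases hφ : φ.Injective; swap
  · simp [Matrix.det_submatrix_eq_zero_of_not_injective_left X ψ hφ]
  by_cases hψ : ψ.Injective; swap
  · simp [Matrix.det_submatrix_eq_zero_of_not_injective_right X φ hψ]
  set σ := Tuple.sort φ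
  set τ := Tuple.sort ψ
  have hsub : X.submatrix φ ψ =
      ((X.submatrix (φ ∘ σ) (ψ ∘ τ)).submatrix σ.symm id).submatrix id τ.symm := by
    ext; simp
  rw [hsub, Matrix.det_permute', Matrix.det_permute, w.map_sign_mul, w.map_sign_mul]
  obtain ⟨i, hi⟩ := hlast
  exact (hX r hr hrn).1 _ _
    ((Tuple.monotone_sort φ).strictMono_of_injective (hφ.comp σ.injective))
    ((Tuple.monotone_sort ψ).strictMono_of_injective (hψ.comp τ.injective))
    ⟨σ.symm i, by simp [hi]⟩

theorem mul_right (hX : WeakMinorCond w lam X) {B : Matrix (Fin n) (Fin n) F} (hB : B ∈ Iw w n) :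
    WeakMinorCond w lam (X * B) := by
  intro r hr hrn
  have hexp (f : Fin r → Fin (n + 1)) (g : Fin r → Fin n) : ((X * B).submatrix f g).det =
      ∑ ψ : Fin r → Fin n, (∏ j, B (ψ j) (g j)) * (X.submatrix f ψ).det := by
    rw [Matrix.submatrix_mul _ _ _ id _ Function.bijective_id, Matrix.det_mul_eq_sum_cols]
    simp only [Matrix.submatrix_apply, Matrix.submatrix_submatrix, Function.comp_id,
      Function.id_comp, id_eq]
  refine ⟨fun f g _ _ hlast => ?_, ?_⟩
  · rw [hexp]
    refine w.map_le_sum fun ψ _ => ?_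
    rw [AddValuation.map_mul]
    exact le_add_of_nonneg_of_le (w.map_prod_nonneg fun _ _ => hB.1.1 _ _)
      (hX.le_map_det_submatrix hr hrn ψ hlast)
  · have hlast : Fin.last n ∈ Set.range (swRow n r hrn) := ⟨_, swRow_last hr hrn⟩
    have hmain : w ((∏ j, B (Fin.castLE hrn j) (Fin.castLE hrn j)) *
        (X.submatrix (swRow n r hrn) (Fin.castLE hrn)).det) = minorSum lam r hrn := by
      rw [AddValuation.map_mul, w.map_prod, Finset.sum_eq_zero fun _ _ => Iw.map_diag hB _,
        zero_add, (hX r hr hrn).2]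
    rw [hexp, w.map_sum_eq_of_lt (Finset.mem_univ (Fin.castLE hrn)), hmain]
    intro ψ hψ
    rw [hmain]
    have hne : ψ ≠ Fin.castLE hrn := by simpa using hψ
    by_cases hinj : ψ.Injective; swap
    · simp [Matrix.det_submatrix_eq_zero_of_not_injective_right _ _ hinj]
    obtain ⟨j, hj⟩ : ∃ j, Fin.castLE hrn j < ψ j := by
      by_contra! h
      exact hne (Fin.eq_castLE_of_injective hrn hinj h)
    exact w.lt_map_mul_of_pos_of_le
      (w.lt_map_prod (Finset.mem_univ j) (Iw.pos_of_lt hB hj) fun _ _ => hB.1.1 _ _)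
      (hX.le_map_det_submatrix hr hrn ψ hlast)

theorem mul_left (hX : WeakMinorCond w lam X) {A : Matrix (Fin (n + 1)) (Fin (n + 1)) F}
    (hA : A ∈ Iw w (n + 1)) (hA_last : ∀ j, j ≠ Fin.last n → A (Fin.last n) j = 0) :
    WeakMinorCond w lam (A * X) := by
  intro r hr hrn
  have hexp (f : Fin r → Fin (n + 1)) (g : Fin r → Fin n) : ((A * X).submatrix f g).det =
      ∑ φ : Fin r → Fin (n + 1), (∏ i, A (f i) (φ i)) * (X.submatrix φ g).det := by
    rw [Matrix.submatrix_mul _ _ _ id _ Function.bijective_id, Matrix.det_mul_eq_sum_rows]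
    simp only [Matrix.submatrix_apply, Matrix.submatrix_submatrix, Function.comp_id,
      Function.id_comp, id_eq]
  have hvanish {f φ : Fin r → Fin (n + 1)} (hf : Fin.last n ∈ Set.range f)
      (hφ : Fin.last n ∉ Set.range φ) : ∏ i, A (f i) (φ i) = 0 := by
    obtain ⟨i, hi⟩ := hf
    exact Finset.prod_eq_zero (Finset.mem_univ i) (hi ▸ hA_last _ fun h => hφ ⟨i, h⟩)
  refine ⟨fun f g _ _ hlast => ?_, ?_⟩
  · rw [hexp]
    refine w.map_le_sum fun φ _ => ?_
    by_cases hφ : Fin.last n ∈ Set.range φ; swap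
    · simp [hvanish hlast hφ]
    rw [AddValuation.map_mul]
    exact le_add_of_nonneg_of_le (w.map_prod_nonneg fun _ _ => hA.1.1 _ _)
      (hX.le_map_det_submatrix hr hrn g hφ)
  · have hlast : Fin.last n ∈ Set.range (swRow n r hrn) := ⟨_, swRow_last hr hrn⟩
    have hmain : w ((∏ i, A (swRow n r hrn i) (swRow n r hrn i)) *
        (X.submatrix (swRow n r hrn) (Fin.castLE hrn)).det) = minorSum lam r hrn := by
      rw [AddValuation.map_mul, w.map_prod, Finset.sum_eq_zero fun _ _ => Iw.map_diag hA _,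
        zero_add, (hX r hr hrn).2]
    rw [hexp, w.map_sum_eq_of_lt (Finset.mem_univ (swRow n r hrn)), hmain]
    intro φ hφ
    rw [hmain]
    have hne : φ ≠ swRow n r hrn := by simpa using hφ
    by_cases hφ_last : Fin.last n ∈ Set.range φ; swap
    · simp [hvanish hlast hφ_last]
    by_cases hinj : φ.Injective; swap
    · simp [Matrix.det_submatrix_eq_zero_of_not_injective_left _ _ hinj]
    obtain ⟨i, hi⟩ : ∃ i, φ i < swRow n r hrn i := by
      by_contra! h
      exact hne (eq_swRow_of_injective hrn hinj h)
    exact w.lt_map_mul_of_pos_of_le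
      (w.lt_map_prod (Finset.mem_univ i) (Iw.pos_of_lt hA hi) fun _ _ => hA.1.1 _ _)
      (hX.le_map_det_submatrix hr hrn _ hφ_last)

theorem dg1_mul_mul (hX : WeakMinorCond w lam X) {k k' : Matrix (Fin n) (Fin n) F}
    (hk : k ∈ Iw w n) (hk' : k' ∈ Iw w n) : WeakMinorCond w lam (dg1 k * X * k') :=
  (hX.mul_left (dg1_mem_Iw hk) fun _ => dg1_apply_last_of_ne k).mul_right hk'

end WeakMinorCond

theorem statement5_general {F : Type*} [Field F] (v : F → WithTop ℤ) (ϖ : F) (hval : IsDVal v ϖ)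
    (n : ℕ) (lam : Fin n → ℤ)
    (X X' : Matrix (Fin (n + 1)) (Fin n) F)
    (k : Matrix (Fin n) (Fin n) F) (hk : k ∈ Iw v n)
    (k' : Matrix (Fin n) (Fin n) F) (hk' : k' ∈ Iw v n)
    (hX' : X' = dg1 k * X * k') :
    WeakMinorCond v lam X ↔ WeakMinorCond v lam X' := by
  obtain ⟨w, rfl⟩ : ∃ w : AddValuation F (WithTop ℤ), ⇑w = v := ⟨hval.toAddValuation, rfl⟩
  obtain ⟨k₂, hk₂, -, hk₂k⟩ := Iw.exists_inv hk
  obtain ⟨k₂', hk₂', hk'k₂', -⟩ := Iw.exists_inv hk'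
  have hX : X = dg1 k₂ * X' * k₂' := by
    rw [hX', ← Matrix.mul_assoc, ← Matrix.mul_assoc, dg1_mul, hk₂k, dg1_one, Matrix.one_mul,
      Matrix.mul_assoc, hk'k₂', Matrix.mul_one]
  exact ⟨fun h => hX' ▸ h.dg1_mul_mul hk hk', fun h => hX ▸ h.dg1_mul_mul hk₂ hk₂'⟩

/-- Lemma 6.2 (2): the Weak Minor Condition is invariant under `diag(Iw_n, 1) × Iw_n`. -/
theorem statement5 {F : Type*} [Field F] (v : F → WithTop ℤ) (ϖ : F) (hval : IsDVal v ϖ)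
    (n : ℕ) (hn : 1 ≤ n) (lam : Fin n → ℤ) (hlam : StrictMono lam)
    (X X' : Matrix (Fin (n + 1)) (Fin n) F)
    (k : Matrix (Fin n) (Fin n) F) (hk : k ∈ Iw v n)
    (k' : Matrix (Fin n) (Fin n) F) (hk' : k' ∈ Iw v n)
    (hX' : X' = dg1 k * X * k') :
    WeakMinorCond v lam X ↔ WeakMinorCond v lam X' :=
  statement5_general v ϖ hval n lam X X' k hk k' hk' hX'
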